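/- Let G be a graph with n vertices, m edges, energy E, largest eigenvalue λ₁ > 0 and minimal absolute eigenvalue t. Then E ≥ √(2mn) · √(4λ₁t/(λ₁+t)²). -/

import Mathlib

/-!
Every eigenvalue satisfies `t ≤ |λᵢ| ≤ λ₁`; the upper bound holds because the adjacency matrix
is entrywise nonnegative, so `|v ⬝ᵥ A v| ≤ |v| ⬝ᵥ A |v| ≤ λ₁` for a unit eigenvector `v`.
Hence `(λ₁ - |λᵢ|)(|λᵢ| - t) ≥ 0`, i.e. `λᵢ² + λ₁ t ≤ (λ₁ + t)|λᵢ|`. Summing over `i` and using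
`∑ λᵢ² = tr A² = 2m` gives `2m + n λ₁ t ≤ (λ₁ + t) E`, and AM-GM `2√(2m · n λ₁ t) ≤ 2m + n λ₁ t`
turns this into the bound.
-/

open Matrix Finset Unitary

namespace Matrix.IsHermitian

variable {𝕜 n : Type*} [RCLike 𝕜] [Fintype n] [DecidableEq n] {A : Matrix n n 𝕜}

theorem trace_mul_self_eq_sum_eigenvalues_sq (hA : A.IsHermitian) :
    (A * A).trace = ∑ i, (hA.eigenvalues i : 𝕜) ^ 2 := by
  conv_lhs => rw [hA.spectral_theorem]
  rw [← map_mul, conjStarAlgAut_apply, trace_mul_cycle,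
    Unitary.coe_star_mul_self, one_mul, diagonal_mul_diagonal, trace_diagonal]
  simp [sq]

open scoped ComplexOrder in
theorem posSemidef_smul_one_sub_of_eigenvalues_le (hA : A.IsHermitian) {c : ℝ}
    (hc : ∀ i, hA.eigenvalues i ≤ c) : (c • (1 : Matrix n n 𝕜) - A).PosSemidef := by
  set U := hA.eigenvectorUnitary
  have hdiag : c • (1 : Matrix n n 𝕜) - A =
      conjStarAlgAut 𝕜 _ U (diagonal fun i ↦ ((c - hA.eigenvalues i : ℝ) : 𝕜)) := by
    conv_lhs => rw [hA.spectral_theorem]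
    rw [RCLike.real_smul_eq_coe_smul (K := 𝕜), ← map_one (conjStarAlgAut 𝕜 _ U), ← map_smul,
      ← map_sub]
    congr 1
    ext i j
    by_cases h : i = j <;> simp [h, Algebra.algebraMap_eq_smul_one, sub_smul]
  rw [hdiag, conjStarAlgAut_apply, star_eq_conjTranspose]
  refine PosSemidef.mul_mul_conjTranspose_same (PosSemidef.diagonal fun i ↦ ?_) _
  simpa using hc i

end Matrix.IsHermitian

namespace Matrix

variable {n : Type*} [Fintype n]

theorem IsHermitian.dotProduct_mulVec_le_iSup_eigenvalues_mul [DecidableEq n] {A : Matrix n n ℝ}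
    (hA : A.IsHermitian) (w : n → ℝ) :
    w ⬝ᵥ A *ᵥ w ≤ (⨆ i, hA.eigenvalues i) * (w ⬝ᵥ w) := by
  have := (hA.posSemidef_smul_one_sub_of_eigenvalues_le
    (le_ciSup (Set.finite_range hA.eigenvalues).bddAbove)).dotProduct_mulVec_nonneg w
  simp only [star_trivial, sub_mulVec, smul_mulVec, one_mulVec, dotProduct_sub, dotProduct_smul,
    smul_eq_mul] at this
  linarith

theorem abs_dotProduct_mulVec_le_of_nonneg {A : Matrix n n ℝ} (hA : ∀ i j, 0 ≤ A i j)
    (v : n → ℝ) : |v ⬝ᵥ A *ᵥ v| ≤ |v| ⬝ᵥ A *ᵥ |v| := by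
  simp only [dotProduct, mulVec, Pi.abs_apply]
  refine (abs_sum_le_sum_abs _ _).trans (sum_le_sum fun i _ ↦ ?_)
  rw [abs_mul]
  gcongr
  refine (abs_sum_le_sum_abs _ _).trans_eq (sum_congr rfl fun j _ ↦ ?_)
  rw [abs_mul, abs_of_nonneg (hA i j)]

theorem IsHermitian.abs_eigenvalues_le_iSup_eigenvalues [DecidableEq n] {A : Matrix n n ℝ}
    (hA : A.IsHermitian) (hA₀ : ∀ i j, 0 ≤ A i j) (j : n) :
    |hA.eigenvalues j| ≤ ⨆ i, hA.eigenvalues i := by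
  set v := (hA.eigenvectorBasis j).ofLp
  have hv : v ⬝ᵥ v = 1 := by
    have h := EuclideanSpace.inner_eq_star_dotProduct (hA.eigenvectorBasis j)
      (hA.eigenvectorBasis j)
    rw [real_inner_self_eq_norm_sq, hA.eigenvectorBasis.norm_eq_one] at h
    simpa [v] using h.symm
  have habs : |v| ⬝ᵥ |v| = 1 := by
    simpa [dotProduct, abs_mul_abs_self] using hv
  calc |hA.eigenvalues j| = |v ⬝ᵥ A *ᵥ v| := by simp [hA.eigenvalues_eq j, v]
    _ ≤ |v| ⬝ᵥ A *ᵥ |v| := abs_dotProduct_mulVec_le_of_nonneg hA₀ v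
    _ ≤ (⨆ i, hA.eigenvalues i) * (|v| ⬝ᵥ |v|) := hA.dotProduct_mulVec_le_iSup_eigenvalues_mul _
    _ = ⨆ i, hA.eigenvalues i := by rw [habs, mul_one]

end Matrix

namespace SimpleGraph

variable {V : Type*} (G : SimpleGraph V) [DecidableRel G.Adj] (R : Type*)

theorem adjMatrix_apply_nonneg [Zero R] [One R] [Preorder R] [ZeroLEOneClass R] (i j : V) :
    0 ≤ G.adjMatrix R i j := by
  rw [adjMatrix_apply]
  split_ifs
  exacts [zero_le_one, le_rfl]

theorem trace_adjMatrix_mul_self [Fintype V] [DecidableEq V] [NonAssocSemiring R] :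
    (G.adjMatrix R * G.adjMatrix R).trace = 2 * #G.edgeFinset := by
  simp only [trace, diag_apply, adjMatrix_mul_self_apply_self]
  rw [← Nat.cast_sum, G.sum_degrees_eq_twice_card_edges, Nat.cast_mul, Nat.cast_ofNat]

end SimpleGraph

theorem sq_add_mul_le_add_mul_abs {x l t : ℝ} (ht : t ≤ |x|) (hl : |x| ≤ l) :
    x ^ 2 + l * t ≤ (l + t) * |x| := by
  nlinarith [sq_abs x, mul_nonneg (sub_nonneg.2 hl) (sub_nonneg.2 ht)]

theorem sum_sq_add_card_mul_le_mul_sum_abs {ι : Type*} [Fintype ι] {x : ι → ℝ} {l t : ℝ}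
    (ht : ∀ i, t ≤ |x i|) (hl : ∀ i, |x i| ≤ l) :
    ∑ i, x i ^ 2 + Fintype.card ι * (l * t) ≤ (l + t) * ∑ i, |x i| := by
  simpa [sum_add_distrib, mul_sum] using
    sum_le_sum fun i (_ : i ∈ univ) ↦ sq_add_mul_le_add_mul_abs (ht i) (hl i)

theorem sqrt_mul_sqrt_four_mul_div_sq_le {a b l t E : ℝ} (ha : 0 ≤ a) (hb : 0 ≤ b) (hl : 0 < l)
    (ht : 0 ≤ t) (h : a + b * (l * t) ≤ (l + t) * E) :
    √(a * b) * √(4 * l * t / (l + t) ^ 2) ≤ E := by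
  have hlt : 0 < l + t := by linarith
  have hsum : 0 ≤ a + b * (l * t) := by positivity
  rw [← Real.sqrt_mul (by positivity), Real.sqrt_le_iff]
  refine ⟨nonneg_of_mul_nonneg_right (hsum.trans h) hlt, ?_⟩
  calc a * b * (4 * l * t / (l + t) ^ 2) = 4 * a * (b * (l * t)) / (l + t) ^ 2 := by ring
    _ ≤ (a + b * (l * t)) ^ 2 / (l + t) ^ 2 := by
        gcongr
        nlinarith [sq_nonneg (a - b * (l * t))]
    _ ≤ ((l + t) * E) ^ 2 / (l + t) ^ 2 := by gcongr
    _ = E ^ 2 := by field_simp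

theorem energy_amgm_corollary_general {V : Type*} [Fintype V] [DecidableEq V]
    (G : SimpleGraph V) [DecidableRel G.Adj]
    (hA : (G.adjMatrix ℝ).IsHermitian)
    (hpos : 0 < ⨆ i, hA.eigenvalues i) :
    (∑ i, |hA.eigenvalues i|) ≥
      Real.sqrt (2 * G.edgeFinset.card * Fintype.card V) *
      Real.sqrt (4 * (⨆ i, hA.eigenvalues i) * (⨅ i, |hA.eigenvalues i|) /
        ((⨆ i, hA.eigenvalues i) + (⨅ i, |hA.eigenvalues i|)) ^ 2) := by
  have hsq : ∑ i, hA.eigenvalues i ^ 2 = 2 * #G.edgeFinset := by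
    simpa [G.trace_adjMatrix_mul_self ℝ] using hA.trace_mul_self_eq_sum_eigenvalues_sq.symm
  refine sqrt_mul_sqrt_four_mul_div_sq_le (by positivity) (by positivity) hpos
    (Real.iInf_nonneg fun i ↦ abs_nonneg _) ?_
  rw [← hsq]
  exact sum_sq_add_card_mul_le_mul_sum_abs (ciInf_le (Set.finite_range _).bddBelow)
    (hA.abs_eigenvalues_le_iSup_eigenvalues (G.adjMatrix_apply_nonneg ℝ))

theorem energy_amgm_corollary {V : Type*} [Fintype V] [DecidableEq V] [Nonempty V]
    (G : SimpleGraph V) [DecidableRel G.Adj]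
    (hA : (G.adjMatrix ℝ).IsHermitian)
    (hpos : 0 < ⨆ i, hA.eigenvalues i) :
    (∑ i, |hA.eigenvalues i|) ≥
      Real.sqrt (2 * G.edgeFinset.card * Fintype.card V) *
      Real.sqrt (4 * (⨆ i, hA.eigenvalues i) * (⨅ i, |hA.eigenvalues i|) /
        ((⨆ i, hA.eigenvalues i) + (⨅ i, |hA.eigenvalues i|)) ^ 2) :=
  energy_amgm_corollary_general G hA hpos
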